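/- Let f: ℝ^n → ℝ have L₂-Lipschitz Hessian, M ≥ L₂, and let h* be a global minimizer of the cubic model m(h) = ⟨∇f(x)_[S], h⟩ + (1/2)⟨∇²f(x)_[S] h, h⟩ + (M/6)‖h‖³ over vectors supported on S. Then ‖∇f(x + h*)‖ ≤ ((M+L₂)/2)‖h*‖² + ‖∇f(x) − ∇f(x)_[S]‖ + ‖∇²f(x) − ∇²f(x)_[S]‖ · ‖h*‖. -/

import Mathlib

open scoped RealInnerProductSpace

/-- Zero out the coordinates of `v` outside `S`. -/
noncomputable def restrict {n : ℕ} (S : Finset (Fin n)) (v : EuclideanSpace ℝ (Fin n)) :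
    EuclideanSpace ℝ (Fin n) := WithLp.toLp 2 (fun i => if i ∈ S then v i else 0)

/-- Zero out the entries of the matrix `A` whose row or column index is outside `S`. -/
noncomputable def restrictM {n : ℕ} (S : Finset (Fin n)) (A : Matrix (Fin n) (Fin n) ℝ) :
    Matrix (Fin n) (Fin n) ℝ := fun i j => if i ∈ S ∧ j ∈ S then A i j else 0

/-- The Hessian matrix of `f` at `x`. -/
noncomputable def hessMat {n : ℕ} (f : EuclideanSpace ℝ (Fin n) → ℝ)
    (x : EuclideanSpace ℝ (Fin n)) : Matrix (Fin n) (Fin n) ℝ :=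
  fun i j => (fderiv ℝ (fun z => fderiv ℝ f z) x (EuclideanSpace.single i 1))
      (EuclideanSpace.single j 1)

/-!
Expand `∇f(x + h*)` as the Taylor remainder `∇f(x + h*) − ∇f(x) − ∇²f(x) h*`, plus
`(∇²f(x) − ∇²f(x)_[S]) h*`, plus `∇f(x)_[S] + ∇²f(x)_[S] h*`, plus `∇f(x) − ∇f(x)_[S]`.
Integrating the Lipschitz bound on the Hessian along the segment bounds the first term by
`(L₂/2)‖h*‖²`. Because `h*` minimizes the cubic model over the subspace of vectors supported on `S`,
and the model's gradient `∇f(x)_[S] + ∇²f(x)_[S] h + (M/2)‖h‖ h` lies in that subspace, this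
gradient vanishes at `h*`, so the third term has norm `(M/2)‖h*‖²`.
-/

section Taylor

variable {E F : Type*} [NormedAddCommGroup E] [NormedSpace ℝ E]
  [NormedAddCommGroup F] [NormedSpace ℝ F]

theorem norm_sub_sub_fderiv_le_of_lipschitz {g : E → F} {g' : E → E →L[ℝ] F} {L : ℝ}
    (hg : ∀ z, HasFDerivAt g (g' z) z) (hLip : ∀ y z, ‖g' y - g' z‖ ≤ L * ‖y - z‖) (x h : E) :
    ‖g (x + h) - g x - g' x h‖ ≤ L / 2 * ‖h‖ ^ 2 := by
  set φ : ℝ → F := fun t => g (x + t • h) - g x - t • g' x h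
  have hφ : ∀ t : ℝ, HasDerivAt φ (g' (x + t • h) h - g' x h) t := by
    intro t
    have hline : HasDerivAt (fun s : ℝ => x + s • h) h t := by
      simpa using ((hasDerivAt_id t).smul_const h).const_add x
    exact (((hg _).comp_hasDerivAt t hline).sub_const _).sub
      (by simpa using (hasDerivAt_id t).smul_const (g' x h))
  have hB : ∀ t : ℝ, HasDerivAt (fun t : ℝ => L / 2 * ‖h‖ ^ 2 * t ^ 2)
      (L / 2 * ‖h‖ ^ 2 * (2 * t)) t := fun t => by
    simpa using (hasDerivAt_pow 2 t).const_mul (L / 2 * ‖h‖ ^ 2)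
  have bound : ∀ t ∈ Set.Ico (0 : ℝ) 1,
      ‖g' (x + t • h) h - g' x h‖ ≤ L / 2 * ‖h‖ ^ 2 * (2 * t) := fun t ht =>
    calc ‖g' (x + t • h) h - g' x h‖ ≤ ‖g' (x + t • h) - g' x‖ * ‖h‖ :=
          (g' (x + t • h) - g' x).le_opNorm h
      _ ≤ L * (t * ‖h‖) * ‖h‖ := by
          gcongr
          simpa [norm_smul, abs_of_nonneg ht.1] using hLip (x + t • h) x
      _ = L / 2 * ‖h‖ ^ 2 * (2 * t) := by ring
  simpa [φ] using image_norm_le_of_norm_deriv_right_le_deriv_boundary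
    (fun t _ => (hφ t).continuousAt.continuousWithinAt) (fun t _ => (hφ t).hasDerivWithinAt)
    (by simp [φ]) hB bound (Set.right_mem_Icc.mpr zero_le_one)

end Taylor

section CubicModel

variable {E : Type*} [NormedAddCommGroup E] [InnerProductSpace ℝ E]

noncomputable def cubicModel (g : E) (A : E →L[ℝ] E) (M : ℝ) (h : E) : ℝ :=
  ⟪g, h⟫ + (1 / 2) * ⟪A h, h⟫ + (M / 6) * ‖h‖ ^ 3

noncomputable def cubicModelGrad (g : E) (A : E →L[ℝ] E) (M : ℝ) (h : E) : E :=
  g + A h + (M / 2 * ‖h‖) • h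

theorem hasDerivAt_norm_add_smul_pow_three (u e : E) :
    HasDerivAt (fun t : ℝ => ‖u + t • e‖ ^ 3) (3 * ‖u‖ * ⟪u, e⟫) 0 := by
  have hline : HasDerivAt (fun t : ℝ => u + t • e) e 0 := by
    simpa using ((hasDerivAt_id (0 : ℝ)).smul_const e).const_add u
  have hcube : ∀ v : E, ‖v‖ ^ 3 = (‖v‖ ^ 2) ^ (3 / 2 : ℝ) := fun v => by
    rw [← Real.rpow_natCast, ← Real.rpow_natCast, ← Real.rpow_mul (norm_nonneg v)]
    norm_num
  have hsqrt : (‖u‖ ^ 2) ^ (3 / 2 - 1 : ℝ) = ‖u‖ := by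
    rw [show (3 / 2 - 1 : ℝ) = 1 / 2 by norm_num, ← Real.sqrt_eq_rpow,
      Real.sqrt_sq (norm_nonneg u)]
  -- `‖·‖` is not differentiable at `0`, but `‖·‖ ^ 2` and `t ↦ t ^ (3 / 2)` are
  simp_rw [hcube]
  convert hline.norm_sq.rpow_const (p := 3 / 2) (Or.inr (by norm_num)) using 1
  simp only [zero_smul, add_zero, hsqrt]
  ring

variable {g : E} {A : E →L[ℝ] E} {M : ℝ}

theorem hasDerivAt_cubicModel_add_smul (hA : (A : E →ₗ[ℝ] E).IsSymmetric) (u e : E) :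
    HasDerivAt (fun t : ℝ => cubicModel g A M (u + t • e)) ⟪cubicModelGrad g A M u, e⟫ 0 := by
  have hline : HasDerivAt (fun t : ℝ => u + t • e) e 0 := by
    simpa using ((hasDerivAt_id (0 : ℝ)).smul_const e).const_add u
  have hlin : HasDerivAt (fun t : ℝ => ⟪g, u + t • e⟫) ⟪g, e⟫ 0 := by
    simpa using (hasDerivAt_const (0 : ℝ) g).inner ℝ hline
  have hquad : HasDerivAt (fun t : ℝ => ⟪A (u + t • e), u + t • e⟫) (⟪A u, e⟫ + ⟪A e, u⟫) 0 := by
    simpa using (A.hasFDerivAt.comp_hasDerivAt (0 : ℝ) hline).inner ℝ hline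
  have hsymm : ⟪A e, u⟫ = ⟪A u, e⟫ := (hA e u).trans (real_inner_comm _ _)
  refine ((hlin.add (hquad.const_mul (1 / 2))).add
    ((hasDerivAt_norm_add_smul_pow_three u e).const_mul (M / 6))).congr_deriv ?_
  rw [cubicModelGrad, inner_add_left, inner_add_left, real_inner_smul_left, hsymm]
  ring

theorem inner_cubicModelGrad_eq_zero_of_forall_le (hA : (A : E →ₗ[ℝ] E).IsSymmetric) {u e : E}
    (hmin : ∀ t : ℝ, cubicModel g A M u ≤ cubicModel g A M (u + t • e)) :
    ⟪cubicModelGrad g A M u, e⟫ = 0 := by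
  refine IsLocalMin.hasDerivAt_eq_zero (Filter.Eventually.of_forall fun t => ?_)
    (hasDerivAt_cubicModel_add_smul hA u e)
  simpa using hmin t

theorem norm_add_apply_eq_of_cubicModelGrad_eq_zero (hM : 0 ≤ M) {u : E}
    (hu : cubicModelGrad g A M u = 0) : ‖g + A u‖ = M / 2 * ‖u‖ ^ 2 := by
  rw [eq_neg_of_add_eq_zero_left hu, norm_neg, norm_smul, Real.norm_of_nonneg (by positivity)]
  ring

end CubicModel

section Coordinates

variable {n : ℕ} {S : Finset (Fin n)}

theorem restrict_apply_of_notMem (v : EuclideanSpace ℝ (Fin n)) {i : Fin n} (hi : i ∉ S) :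
    restrict S v i = 0 := by
  simp [restrict, hi]

theorem toEuclideanCLM_restrictM_apply_of_notMem (A : Matrix (Fin n) (Fin n) ℝ)
    (v : EuclideanSpace ℝ (Fin n)) {i : Fin n} (hi : i ∉ S) :
    Matrix.toEuclideanCLM (𝕜 := ℝ) (restrictM S A) v i = 0 := by
  simp [Matrix.mulVec, dotProduct, restrictM, hi]

theorem Matrix.IsHermitian.restrictM {A : Matrix (Fin n) (Fin n) ℝ} (hA : A.IsHermitian)
    (S : Finset (Fin n)) : (_root_.restrictM S A).IsHermitian := by
  ext i j
  simp [_root_.restrictM, and_comm, ← hA.apply i j]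

theorem cubicModelGrad_restrict_eq_zero_of_isMinOn {g : EuclideanSpace ℝ (Fin n)}
    {H : Matrix (Fin n) (Fin n) ℝ} (hH : H.IsHermitian) {M : ℝ} {u : EuclideanSpace ℝ (Fin n)}
    (hu : ∀ i ∉ S, u i = 0)
    (hmin : IsMinOn (cubicModel (restrict S g) (Matrix.toEuclideanCLM (𝕜 := ℝ) (restrictM S H)) M)
      {h | ∀ i ∉ S, h i = 0} u) :
    cubicModelGrad (restrict S g) (Matrix.toEuclideanCLM (𝕜 := ℝ) (restrictM S H)) M u = 0 := by
  set w := cubicModelGrad (restrict S g) (Matrix.toEuclideanCLM (𝕜 := ℝ) (restrictM S H)) M u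
  have hw : ∀ i ∉ S, w i = 0 := fun i hi => by
    simp [w, cubicModelGrad, restrict_apply_of_notMem _ hi,
      toEuclideanCLM_restrictM_apply_of_notMem _ _ hi, hu i hi]
  have hA : (Matrix.toEuclideanCLM (𝕜 := ℝ) (restrictM S H) :
      EuclideanSpace ℝ (Fin n) →ₗ[ℝ] EuclideanSpace ℝ (Fin n)).IsSymmetric := by
    rw [Matrix.coe_toEuclideanCLM_eq_toEuclideanLin, Matrix.isSymmetric_toEuclideanLin_iff]
    exact hH.restrictM S
  refine inner_self_eq_zero.mp (inner_cubicModelGrad_eq_zero_of_forall_le hA fun t => ?_)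
  exact isMinOn_iff.mp hmin _ fun i hi => by simp [hu i hi, hw i hi]

end Coordinates

section Hessian

variable {n : ℕ} {f : EuclideanSpace ℝ (Fin n) → ℝ}

theorem hessMat_isHermitian (hf : ContDiff ℝ 2 f) (x : EuclideanSpace ℝ (Fin n)) :
    (hessMat f x).IsHermitian := by
  ext i j
  exact hf.contDiffAt.isSymmSndFDerivAt (by simp) _ _

theorem toEuclideanCLM_hessMat_apply (hf : ContDiff ℝ 2 f) (x v : EuclideanSpace ℝ (Fin n)) :
    Matrix.toEuclideanCLM (𝕜 := ℝ) (hessMat f x) v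
      = (InnerProductSpace.toDual ℝ _).symm (fderiv ℝ (fderiv ℝ f) x v) := by
  set D := fderiv ℝ (fderiv ℝ f) x
  have hsymm : ∀ u w, D u w = D w u := hf.contDiffAt.isSymmSndFDerivAt (by simp)
  have hexpand : ∀ (φ : EuclideanSpace ℝ (Fin n) →L[ℝ] ℝ),
      φ v = ∑ j, φ (EuclideanSpace.single j 1) * v j := fun φ => by
    conv_lhs => rw [← (EuclideanSpace.basisFun (Fin n) ℝ).toBasis.sum_repr v]
    simp [mul_comm]
  ext i
  have hcoord :
      ((InnerProductSpace.toDual ℝ _).symm (D v)) i = D v (EuclideanSpace.single i 1) := by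
    rw [← InnerProductSpace.toDual_symm_apply, EuclideanSpace.inner_single_right]
    simp
  rw [hcoord, hsymm, hexpand]
  simp [Matrix.mulVec, dotProduct, hessMat, D]

theorem norm_gradient_add_sub_sub_hessMat_le {L : ℝ} (hf : ContDiff ℝ 2 f)
    (hLip : ∀ y z, ‖fderiv ℝ (fderiv ℝ f) y - fderiv ℝ (fderiv ℝ f) z‖ ≤ L * ‖y - z‖)
    (x h : EuclideanSpace ℝ (Fin n)) :
    ‖gradient f (x + h) - gradient f x - Matrix.toEuclideanCLM (𝕜 := ℝ) (hessMat f x) h‖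
      ≤ L / 2 * ‖h‖ ^ 2 := by
  have hd : ∀ z, HasFDerivAt (fderiv ℝ f) (fderiv ℝ (fderiv ℝ f) z) z := fun z =>
    ((hf.fderiv_right le_rfl).differentiable one_ne_zero z).hasFDerivAt
  rw [toEuclideanCLM_hessMat_apply hf, gradient, gradient, ← map_sub, ← map_sub,
    LinearIsometryEquiv.norm_map]
  exact norm_sub_sub_fderiv_le_of_lipschitz hd hLip x h

end Hessian

/-- New gradient norm bound: if `h*` globally minimizes the coordinate-restricted cubic model
with `M ≥ L₂` over vectors supported on `S`, then
`‖∇f(x+h*)‖ ≤ ((M+L₂)/2)‖h*‖² + ‖∇f(x) − ∇f(x)_[S]‖ + ‖∇²f(x) − ∇²f(x)_[S]‖·‖h*‖`. -/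
theorem new_grad_norm_bound {n : ℕ} (f : EuclideanSpace ℝ (Fin n) → ℝ) (L₂ M : ℝ)
    (hL₂ : 0 ≤ L₂) (hM : L₂ ≤ M)
    (hf : ContDiff ℝ 2 f)
    (hLip : ∀ x y : EuclideanSpace ℝ (Fin n),
      ‖fderiv ℝ (fun z => fderiv ℝ f z) x - fderiv ℝ (fun z => fderiv ℝ f z) y‖ ≤ L₂ * ‖x - y‖)
    (S : Finset (Fin n)) (x hs : EuclideanSpace ℝ (Fin n))
    (hsupp : ∀ i ∉ S, hs i = 0)
    (hmin : ∀ h : EuclideanSpace ℝ (Fin n), (∀ i ∉ S, h i = 0) →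
      ⟪restrict S (gradient f x), hs⟫
          + (1 / 2) * ⟪(Matrix.toEuclideanCLM (𝕜 := ℝ) (restrictM S (hessMat f x))) hs, hs⟫
          + (M / 6) * ‖hs‖ ^ 3
        ≤ ⟪restrict S (gradient f x), h⟫
          + (1 / 2) * ⟪(Matrix.toEuclideanCLM (𝕜 := ℝ) (restrictM S (hessMat f x))) h, h⟫
          + (M / 6) * ‖h‖ ^ 3) :
    ‖gradient f (x + hs)‖
      ≤ ((M + L₂) / 2) * ‖hs‖ ^ 2
        + ‖gradient f x - restrict S (gradient f x)‖
        + ‖Matrix.toEuclideanCLM (𝕜 := ℝ) (hessMat f x - restrictM S (hessMat f x))‖ * ‖hs‖ := by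
  set H := hessMat f x
  set gS := restrict S (gradient f x)
  have hstat : ‖gS + Matrix.toEuclideanCLM (𝕜 := ℝ) (restrictM S H) hs‖ = M / 2 * ‖hs‖ ^ 2 :=
    norm_add_apply_eq_of_cubicModelGrad_eq_zero (hL₂.trans hM)
      (cubicModelGrad_restrict_eq_zero_of_isMinOn (hessMat_isHermitian hf x) hsupp
        (isMinOn_iff.mpr hmin))
  have htaylor := norm_gradient_add_sub_sub_hessMat_le hf hLip x hs
  have hsplit : gradient f (x + hs)
      = (gradient f (x + hs) - gradient f x - Matrix.toEuclideanCLM (𝕜 := ℝ) H hs)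
        + Matrix.toEuclideanCLM (𝕜 := ℝ) (H - restrictM S H) hs
        + (gS + Matrix.toEuclideanCLM (𝕜 := ℝ) (restrictM S H) hs)
        + (gradient f x - gS) := by
    rw [map_sub, sub_apply]
    abel
  calc ‖gradient f (x + hs)‖
      ≤ ‖gradient f (x + hs) - gradient f x - Matrix.toEuclideanCLM (𝕜 := ℝ) H hs‖
        + ‖Matrix.toEuclideanCLM (𝕜 := ℝ) (H - restrictM S H) hs‖
        + ‖gS + Matrix.toEuclideanCLM (𝕜 := ℝ) (restrictM S H) hs‖
        + ‖gradient f x - gS‖ := (congrArg norm hsplit).trans_le norm_add₄_le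
    _ ≤ L₂ / 2 * ‖hs‖ ^ 2 + ‖Matrix.toEuclideanCLM (𝕜 := ℝ) (H - restrictM S H)‖ * ‖hs‖
        + M / 2 * ‖hs‖ ^ 2 + ‖gradient f x - gS‖ := by
      rw [hstat]
      gcongr
      exact ContinuousLinearMap.le_opNorm _ _
    _ = _ := by ring
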